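/- arXiv:1303.2295 — 2 statements merged into one kernel-verified Lean document; each statement's English description precedes it below -/
import Mathlib

section
/- Let Ω ⊆ ℝⁿ be a measurable set of finite measure, p : Ω → ℝ measurable with 1 < p⁻ ≤ p(x) ≤ p⁺ for all x, and u ∈ L^{p⁺}(Ω) with u ≠ 0. If ν > 0 satisfies ∫_Ω |u(x)/ν|^{p(x)} / p(x) dx ≤ 1, then ∫_Ω |u(x)|^{p⁻} / p⁻ dx ≤ ν^{p⁻} · (1 + ∫_Ω (1/p⁻ − 1/p(x)) dx). -/
/-!
For `t = |u x / ν|`, weighted AM–GM with weights `p⁻ / p x` and `1 - p⁻ / p x` applied to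
`t ^ p x` and `1` gives `t ^ p⁻ / p⁻ ≤ t ^ p x / p x + (1 / p⁻ - 1 / p x)`. Integrating over `Ω`,
the modular bound caps the first term by `1`, and scaling by `ν ^ p⁻` gives the claim. Every
integrand is dominated by a multiple of `1 + |u / ν| ^ p⁺`, which is integrable since `Ω` has finite
measure.
-/

namespace Real

theorem rpow_le_one_add_rpow_of_le {t s c : ℝ} (ht : 0 ≤ t) (hs : 0 ≤ s) (hsc : s ≤ c) :
    t ^ s ≤ 1 + t ^ c := by
  rcases le_or_gt t 1 with h | h
  · linarith [rpow_le_one ht h hs, rpow_nonneg ht c]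
  · linarith [rpow_le_rpow_of_exponent_le h.le hsc, rpow_nonneg ht s]

theorem rpow_div_le_rpow_div_add_one_div_sub_one_div {t a b : ℝ} (ht : 0 ≤ t) (ha : 0 < a)
    (hab : a ≤ b) : t ^ a / a ≤ t ^ b / b + (1 / a - 1 / b) := by
  have hb : 0 < b := ha.trans_le hab
  have hw : a / b ≤ 1 := (div_le_one hb).mpr hab
  have hamgm := geom_mean_le_arith_mean2_weighted (div_nonneg ha.le hb.le) (sub_nonneg.mpr hw)
    (rpow_nonneg ht b) zero_le_one (add_sub_cancel _ 1)
  have hpow : (t ^ b) ^ (a / b) = t ^ a := by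
    rw [← rpow_mul ht, mul_div_cancel₀ a hb.ne']
  rw [hpow, one_rpow, mul_one, mul_one] at hamgm
  rw [div_le_iff₀ ha]
  calc t ^ a ≤ a / b * t ^ b + (1 - a / b) := hamgm
    _ = (t ^ b / b + (1 / a - 1 / b)) * a := by field_simp

end Real

namespace MeasureTheory

variable {α : Type*} [MeasurableSpace α] {μ : Measure α} [IsFiniteMeasure μ]
  {f p : α → ℝ} {a b : ℝ}

theorem MemLp.integrable_abs_rpow_of_le (hf : MemLp f (ENNReal.ofReal b) μ)
    (hp : AEMeasurable p μ) (hpb : ∀ᵐ x ∂μ, 0 ≤ p x ∧ p x ≤ b) :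
    Integrable (fun x => |f x| ^ p x) μ := by
  have hdom : Integrable (fun x => 1 + |f x| ^ (ENNReal.ofReal b).toReal) μ :=
    (integrable_const 1).add hf.integrable_norm_rpow'
  refine hdom.mono' (hf.1.aemeasurable.abs.pow hp).aestronglyMeasurable ?_
  filter_upwards [hpb] with x ⟨hp0, hpb⟩
  rw [Real.norm_of_nonneg (Real.rpow_nonneg (abs_nonneg _) _)]
  exact Real.rpow_le_one_add_rpow_of_le (abs_nonneg _) hp0
    (hpb.trans (ENNReal.toReal_ofReal' ▸ le_max_left b 0))

theorem integrable_inv_of_le (hp : AEMeasurable p μ) (ha : 0 < a) (hap : ∀ᵐ x ∂μ, a ≤ p x) :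
    Integrable (fun x => (p x)⁻¹) μ := by
  refine (integrable_const a⁻¹).mono' hp.inv.aestronglyMeasurable ?_
  filter_upwards [hap] with x hx
  rw [norm_inv, Real.norm_of_nonneg (ha.le.trans hx)]
  exact inv_anti₀ ha hx

theorem MemLp.integrable_abs_rpow_div_of_le (hf : MemLp f (ENNReal.ofReal b) μ)
    (hp : AEMeasurable p μ) (ha : 0 < a) (hpb : ∀ᵐ x ∂μ, a ≤ p x ∧ p x ≤ b) :
    Integrable (fun x => |f x| ^ p x / p x) μ := by
  refine (hf.integrable_abs_rpow_of_le hp ?_).mul_bdd hp.inv.aestronglyMeasurable (c := a⁻¹) ?_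
  · filter_upwards [hpb] with x hx
    exact ⟨ha.le.trans hx.1, hx.2⟩
  · filter_upwards [hpb] with x hx
    rw [norm_inv, Real.norm_of_nonneg (ha.le.trans hx.1)]
    exact inv_anti₀ ha hx.1

theorem integral_abs_rpow_div_le (hf : MemLp f (ENNReal.ofReal b) μ) (hp : AEMeasurable p μ)
    (ha : 0 < a) (hpb : ∀ᵐ x ∂μ, a ≤ p x ∧ p x ≤ b) :
    ∫ x, |f x| ^ a / a ∂μ ≤ ∫ x, |f x| ^ p x / p x ∂μ + ∫ x, (1 / a - 1 / p x) ∂μ := by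
  have hmod := hf.integrable_abs_rpow_div_of_le hp ha hpb
  have hgap : Integrable (fun x => 1 / a - 1 / p x) μ := by
    simp only [one_div]
    exact (integrable_const a⁻¹).sub (integrable_inv_of_le hp ha (hpb.mono fun x hx => hx.1))
  rw [← integral_add hmod hgap]
  refine integral_mono_of_nonneg (.of_forall fun x => by positivity) (hmod.add hgap) ?_
  filter_upwards [hpb] with x hx
  exact Real.rpow_div_le_rpow_div_add_one_div_sub_one_div (abs_nonneg _) ha hx.1

end MeasureTheory

open MeasureTheory

theorem luxemburg_lower_modular_general (n : ℕ) (Ω : Set (Fin n → ℝ)) (hΩ : MeasurableSet Ω)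
    (hfin : volume Ω < ⊤) (p : (Fin n → ℝ) → ℝ) (hpmeas : Measurable p)
    (pm pp : ℝ) (hpm : 1 < pm) (hbounds : ∀ x ∈ Ω, pm ≤ p x ∧ p x ≤ pp)
    (u : (Fin n → ℝ) → ℝ) (hu : MemLp u (ENNReal.ofReal pp) (volume.restrict Ω))
    (ν : ℝ) (hν : 0 < ν)
    (hmod : ∫ x in Ω, |u x / ν| ^ p x / p x ≤ 1) :
    ∫ x in Ω, |u x| ^ pm / pm ≤ ν ^ pm * (1 + ∫ x in Ω, (1 / pm - 1 / p x)) := by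
  have : IsFiniteMeasure (volume.restrict Ω) := isFiniteMeasure_restrict.mpr hfin.ne
  have hyoung := integral_abs_rpow_div_le (hu.const_mul ν⁻¹) hpmeas.aemeasurable
    (zero_lt_one.trans hpm) (ae_restrict_of_forall_mem hΩ hbounds)
  have hscale : ∀ x, |u x| ^ pm / pm = ν ^ pm * (|ν⁻¹ * u x| ^ pm / pm) := fun x => by
    rw [abs_mul, abs_inv, abs_of_pos hν, Real.mul_rpow (inv_nonneg.mpr hν.le) (abs_nonneg _),
      Real.inv_rpow hν.le]
    field_simp
  simp only [hscale, integral_const_mul, inv_mul_eq_div] at hyoung ⊢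
  gcongr
  linarith

theorem luxemburg_lower_modular (n : ℕ) (Ω : Set (Fin n → ℝ)) (hΩ : MeasurableSet Ω)
    (hfin : volume Ω < ⊤) (p : (Fin n → ℝ) → ℝ) (hpmeas : Measurable p)
    (pm pp : ℝ) (hpm : 1 < pm) (hbounds : ∀ x ∈ Ω, pm ≤ p x ∧ p x ≤ pp)
    (u : (Fin n → ℝ) → ℝ) (hu : MemLp u (ENNReal.ofReal pp) (volume.restrict Ω))
    (hune : ¬ (∀ᵐ x ∂(volume.restrict Ω), u x = 0))
    (ν : ℝ) (hν : 0 < ν)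
    (hmod : ∫ x in Ω, |u x / ν| ^ p x / p x ≤ 1) :
    ∫ x in Ω, |u x| ^ pm / pm ≤ ν ^ pm * (1 + ∫ x in Ω, (1 / pm - 1 / p x)) :=
  luxemburg_lower_modular_general n Ω hΩ hfin p hpmeas pm pp hpm hbounds u hu ν hν hmod
end

section
/- Let Ω be a measure space and p : Ω → ℝ measurable with 1 < p⁻ ≤ p(x) ≤ p⁺ < ∞. If u, v are measurable functions with ∫_Ω |u(x)|^{p(x)}/p(x) dμ = 1 and ∫_Ω |v(x)|^{p(x)}/p(x) dμ = 1, then ∫_Ω |u(x)|^{p(x)−1} |v(x)| dμ ≤ ∫_Ω |u(x)|^{p(x)} dμ. -/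
/-!
Integrate Young's inequality `a ^ (p - 1) * b ≤ (1 - 1/p) a ^ p + b ^ p / p` pointwise with
`a = |u x|`, `b = |v x|`, `p = p x`: the right-hand side integrates to `∫ |u| ^ p - 1 + 1`.
The normalizations make `|u| ^ p / p` and `|v| ^ p / p` integrable, hence also `|u| ^ p` as `p` is
bounded; the nonnegative left-hand side needs no integrability for the comparison.
-/

open MeasureTheory

theorem Real.rpow_sub_one_mul_le {a b p : ℝ} (ha : 0 ≤ a) (hb : 0 ≤ b) (hp : 1 < p) :
    a ^ (p - 1) * b ≤ a ^ p - a ^ p / p + b ^ p / p := by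
  have hp0 : p ≠ 0 := by positivity
  have hp1 : p - 1 ≠ 0 := sub_ne_zero.2 hp.ne'
  have young := Real.young_inequality_of_nonneg (Real.rpow_nonneg ha (p - 1)) hb
    (Real.HolderConjugate.conjExponent hp).symm
  have hpow : (a ^ (p - 1)) ^ p.conjExponent = a ^ p := by
    rw [← Real.rpow_mul ha, Real.conjExponent]
    congr 1
    field_simp
  rw [hpow, Real.conjExponent] at young
  calc a ^ (p - 1) * b ≤ a ^ p / (p / (p - 1)) + b ^ p / p := young
    _ = a ^ p - a ^ p / p + b ^ p / p := by field_simp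

theorem MeasureTheory.Integrable.of_div {α : Type*} [MeasurableSpace α] {μ : Measure α}
    {f g : α → ℝ} {C : ℝ} (hfg : Integrable (fun x => f x / g x) μ)
    (hg : AEStronglyMeasurable g μ) (hgC : ∀ᵐ x ∂μ, ‖g x‖ ≤ C) (hg0 : ∀ᵐ x ∂μ, g x ≠ 0) :
    Integrable f μ := by
  refine (hfg.bdd_mul hg hgC).congr ?_
  filter_upwards [hg0] with x hx
  exact mul_div_cancel₀ (f x) hx

theorem modular_holder_variable_general {α : Type*} [MeasurableSpace α] (μ : Measure α)
    (p : α → ℝ) (hp : Measurable p) (pm pp : ℝ) (hpm : 1 < pm)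
    (hbounds : ∀ x, pm ≤ p x ∧ p x ≤ pp)
    (u v : α → ℝ)
    (hmu : ∫ x, |u x| ^ p x / p x ∂μ = 1) (hmv : ∫ x, |v x| ^ p x / p x ∂μ = 1) :
    ∫ x, |u x| ^ (p x - 1) * |v x| ∂μ ≤ ∫ x, |u x| ^ p x ∂μ := by
  have hp1 (x : α) : 1 < p x := hpm.trans_le (hbounds x).1
  have hmu_int : Integrable (fun x => |u x| ^ p x / p x) μ :=
    .of_integral_ne_zero (by rw [hmu]; exact one_ne_zero)
  have hmv_int : Integrable (fun x => |v x| ^ p x / p x) μ :=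
    .of_integral_ne_zero (by rw [hmv]; exact one_ne_zero)
  have hu_int : Integrable (fun x => |u x| ^ p x) μ :=
    hmu_int.of_div hp.aestronglyMeasurable
      (.of_forall fun x => by
        rw [Real.norm_of_nonneg (by linarith [hp1 x])]; exact (hbounds x).2)
      (.of_forall fun x => by linarith [hp1 x])
  calc ∫ x, |u x| ^ (p x - 1) * |v x| ∂μ
        ≤ ∫ x, |u x| ^ p x - |u x| ^ p x / p x + |v x| ^ p x / p x ∂μ :=
          integral_mono_of_nonneg (.of_forall fun x => by positivity)
            ((hu_int.sub' hmu_int).add hmv_int)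
            (.of_forall fun x => Real.rpow_sub_one_mul_le (abs_nonneg _) (abs_nonneg _) (hp1 x))
    _ = ∫ x, |u x| ^ p x ∂μ := by
          rw [integral_add (hu_int.sub' hmu_int) hmv_int, integral_sub hu_int hmu_int, hmu, hmv]
          ring

theorem modular_holder_variable {α : Type*} [MeasurableSpace α] (μ : Measure α)
    (p : α → ℝ) (hp : Measurable p) (pm pp : ℝ) (hpm : 1 < pm)
    (hbounds : ∀ x, pm ≤ p x ∧ p x ≤ pp)
    (u v : α → ℝ) (hu : Measurable u) (hv : Measurable v)
    (hmu : ∫ x, |u x| ^ p x / p x ∂μ = 1) (hmv : ∫ x, |v x| ^ p x / p x ∂μ = 1) :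
    ∫ x, |u x| ^ (p x - 1) * |v x| ∂μ ≤ ∫ x, |u x| ^ p x ∂μ :=
  modular_holder_variable_general μ p hp pm pp hpm hbounds u v hmu hmv
end
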